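/- If a Turing machine T halts on input α_I, then the simulating subtyping machine built from the class table of Figure 4, started in configuration Z E E N L_# N M^L N L_{a₁} … N L_{a_m} N L_# Q_I^wR ◁ E E Z (where α_I = a₁…a_m), reaches the halting configuration •; conversely, if T does not halt on α_I, the subtyping machine runs forever, and in particular never halts. Hence Q_I^wR L_# N L_{a_m} N … L_{a₁} N M^L N L_# N E E Z ⊑ E E Z if and only if T halts on α_I. -/

import Mathlib

/-- An inheritance rule for a unary class table: `lhs x ◁ rhs x` (if `usesVar = true`)
or `lhs x ◁ rhs Z` (if `usesVar = false`), where all class names in `rhs` are unary and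
`Z` is the distinguished nullary class.  A ground type `C₁ C₂ … C_m Z` is represented by
the word `[C₁, C₂, …, C_m]` (the trailing `Z` is implicit). -/
structure URule (C : Type*) : Type _ where
  lhs : C
  rhs : List C
  usesVar : Bool

variable {C : Type*}

/-- The inheritance relation `◁` on ground types (words over unary class names, with the
trailing `Z` implicit), induced by a unary class table: `C w ◁ rhs[x := w]`. -/
def UInh (table : Set (URule C)) (w w' : List C) : Prop :=
  ∃ r ∈ table, ∃ u : List C,
    w = r.lhs :: u ∧ w' = r.rhs ++ (if r.usesVar then u else [])

/-- `◁*`, the reflexive transitive closure of the inheritance relation. -/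
def UInhStar (table : Set (URule C)) : List C → List C → Prop :=
  Relation.ReflTransGen (UInh table)

/-- Contravariant subtyping specialized to unary class tables:
`C₁…C_m Z ⊑ Z` iff `C₁…C_m Z ◁* Z`, and
`C₁…C_m Z ⊑ D₁ D₂…D_n Z` iff `C₁…C_m Z ◁* D₁ E₂…E_p Z` for some `E₂…E_p` with
`D₂…D_n Z ⊑ E₂…E_p Z` (note the contravariant flip). -/
inductive USub (table : Set (URule C)) : List C → List C → Prop
  | nil {w : List C} : UInhStar table w [] → USub table w []
  | cons {w e ds : List C} {d : C} :
      UInhStar table w (d :: e) → USub table ds e → USub table w (d :: ds)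

/-- A configuration of the subtyping machine: `some (w, w')` represents
`Z (reverse w) ◁ w' Z` (equivalently its mirrored `▷` form), i.e. the pending query
`w Z ⊑ w' Z`; `none` is the halting configuration `•`. -/
abbrev UConfig (C : Type*) := Option (List C × List C)

/-- Execution steps of the subtyping machine:
`(Z C_m…C₁ ◁ Z) ⇝ •` if `C₁…C_m Z ◁* Z`, and
`(Z C_m…C₁ ◁ D₁…D_n Z) ⇝ (Z E_p…E₂ ▷ D₂…D_n Z)` if `C₁…C_m Z ◁* D₁ E₂…E_p Z`
(the target being the mirror of `(Z D_n…D₂ ◁ E₂…E_p Z)`). -/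
inductive UStep (table : Set (URule C)) : UConfig C → UConfig C → Prop
  | halt {w : List C} : UInhStar table w [] → UStep table (some (w, [])) none
  | move {w e ds : List C} {d : C} :
      UInhStar table w (d :: e) → UStep table (some (w, d :: ds)) (some (ds, e))

/-- Movement directions of a Turing machine head. -/
inductive Dir : Type
  | left | stay | right
deriving DecidableEq

/-- A Turing machine configuration `(q, α, b, γ)`: current state, left part of the tape,
current symbol (`none` is the blank `⊥`), and right part of the tape. -/
structure TMCfg (Q Γ : Type*) : Type _ where
  state : Q
  left : List Γ
  cur : Option Γ
  right : List Γ

/-- A deterministic Turing machine `(Q, q_I, q_H, Σ, δ)` with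
`δ : Q × Σ_⊥ → Q × Σ × {L,S,R}`, where the halt state loops via `S`-steps. -/
structure TM (Q Γ : Type*) : Type _ where
  init : Q
  halt : Q
  δ : Q → Option Γ → Q × Γ × Dir
  halt_stay : ∀ a : Γ, δ halt (some a) = (halt, a, Dir.stay)
  halt_blank : ∃ a : Γ, δ halt none = (halt, a, Dir.stay)

variable {Q Γ : Type*}

/-- The execution steps of a Turing machine, including the steps that go outside
the existing tape. -/
inductive TMStep (M : TM Q Γ) : TMCfg Q Γ → TMCfg Q Γ → Prop
  | moveL {q : Q} {α γ : List Γ} {a : Γ} {b : Option Γ} {q' : Q} {b' : Γ} :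
      M.δ q b = (q', b', .left) →
      TMStep M ⟨q, α ++ [a], b, γ⟩ ⟨q', α, some a, b' :: γ⟩
  | stay {q : Q} {α γ : List Γ} {b : Option Γ} {q' : Q} {b' : Γ} :
      M.δ q b = (q', b', .stay) →
      TMStep M ⟨q, α, b, γ⟩ ⟨q', α, some b', γ⟩
  | moveR {q : Q} {α γ : List Γ} {c : Γ} {b : Option Γ} {q' : Q} {b' : Γ} :
      M.δ q b = (q', b', .right) →
      TMStep M ⟨q, α, b, c :: γ⟩ ⟨q', α ++ [b'], some c, γ⟩
  | moveLEnd {q : Q} {γ : List Γ} {b : Option Γ} {q' : Q} {b' : Γ} :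
      M.δ q b = (q', b', .left) →
      TMStep M ⟨q, [], b, γ⟩ ⟨q', [], none, b' :: γ⟩
  | moveREnd {q : Q} {α : List Γ} {b : Option Γ} {q' : Q} {b' : Γ} :
      M.δ q b = (q', b', .right) →
      TMStep M ⟨q, α, b, []⟩ ⟨q', α ++ [b'], none, []⟩

/-- `M` halts on input tape `α_I`: some run from `(q_I, ε, ⊥, α_I)` reaches
the halt state. -/
def TMHalts (M : TM Q Γ) (input : List Γ) : Prop :=
  ∃ cfg : TMCfg Q Γ,
    Relation.ReflTransGen (TMStep M) ⟨M.init, [], none, input⟩ cfg ∧ cfg.state = M.halt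

/-- The unary class names of the reduction (Figure 4): for each state `q` the classes
`Q_q^wL, Q_q^wR, Q_q^L, Q_q^R, Q_q^LR, Q_q^RL`; for each letter of `Σ ∪ {#}` a class
`L_a` (`Lt none` is `L_#`); and the auxiliary classes `N`, `E`, `M^L`, `M^R`. -/
inductive FCls (Q Γ : Type*) : Type _
  | QwL (q : Q) | QwR (q : Q) | QL (q : Q) | QR (q : Q) | QLR (q : Q) | QRL (q : Q)
  | Lt (a : Option Γ)
  | N | E | ML | MR

namespace FCls
variable {Q Γ : Type*}

/-- Swapping `L ↔ R` in a class name. -/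
def swap : FCls Q Γ → FCls Q Γ
  | QwL q => QwR q | QwR q => QwL q
  | QL q => QR q | QR q => QL q
  | QLR q => QRL q | QRL q => QLR q
  | ML => MR | MR => ML
  | Lt a => Lt a | N => N | E => E

end FCls

/-- Swapping `L ↔ R` in all class names of a rule. -/
def URule.swapLR {Q Γ : Type*} (r : URule (FCls Q Γ)) : URule (FCls Q Γ) :=
  ⟨r.lhs.swap, r.rhs.map FCls.swap, r.usesVar⟩

/-- Swapping `L ↔ R` as a direction. -/
def Dir.swap : Dir → Dir
  | .left => .right | .right => .left | .stay => .stay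

/-- The left-hand half of the class table of Figure 4, for halt state `qH` and
transition function `δ`; the full table also contains the `L ↔ R`-swapped rules. -/
inductive Fig4Core {Q Γ : Type*} (qH : Q) (δ : Q → Option Γ → Q × Γ × Dir) :
    Set (URule (FCls Q Γ))
  | waitHead (q : Q) : Fig4Core qH δ ⟨.QwL q, [.ML, .N, .QL q], true⟩
  | waitFar (q : Q) : Fig4Core qH δ ⟨.QwL q, [.MR, .N, .QwL q, .MR, .N], true⟩
  | waitLetter (q : Q) (a : Option Γ) :
      Fig4Core qH δ ⟨.QwL q, [.Lt a, .N, .QwL q, .Lt a, .N], true⟩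
  | turn (q : Q) : q ≠ qH → Fig4Core qH δ ⟨.QwL q, [.E, .QLR q, .N], true⟩
  | halt : Fig4Core qH δ ⟨.QwL qH, [.E, .E], false⟩
  | bounce (q : Q) : Fig4Core qH δ ⟨.E, [.QLR q, .N, .QwR q, .E, .E], true⟩
  | transL {q : Q} {a : Γ} {q' : Q} {b : Γ} : δ q (some a) = (q', b, .left) →
      Fig4Core qH δ
        ⟨.QL q, [.Lt (some a), .N, .QwL q', .ML, .N, .Lt (some b), .N], true⟩
  | transS {q : Q} {a : Γ} {q' : Q} {b : Γ} : δ q (some a) = (q', b, .stay) →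
      Fig4Core qH δ
        ⟨.QL q, [.Lt (some a), .N, .QwL q', .MR, .N, .Lt (some b), .N], true⟩
  | transR {q : Q} {a : Γ} {q' : Q} {b : Γ} : δ q (some a) = (q', b, .right) →
      Fig4Core qH δ
        ⟨.QL q, [.Lt (some a), .N, .QwL q', .Lt (some b), .N, .MR, .N], true⟩
  | blankL {q q' : Q} {b : Γ} : δ q none = (q', b, .left) →
      Fig4Core qH δ
        ⟨.QL q, [.Lt none, .N, .QwL q', .Lt none, .N, .ML, .N, .Lt (some b), .N], true⟩
  | blankS {q q' : Q} {b : Γ} : δ q none = (q', b, .stay) →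
      Fig4Core qH δ
        ⟨.QL q, [.Lt none, .N, .QwL q', .Lt none, .N, .MR, .N, .Lt (some b), .N], true⟩
  | blankR {q q' : Q} {b : Γ} : δ q none = (q', b, .right) →
      Fig4Core qH δ
        ⟨.QL q, [.Lt none, .N, .QwL q', .Lt none, .N, .Lt (some b), .N, .MR, .N], true⟩

/-- The class table of Figure 4 for a Turing machine `M`: the core rules together with
all rules obtained from them by swapping `L ↔ R` (both in the class names and in the
direction appearing in the side condition on `δ`). -/
def Fig4 {Q Γ : Type*} (M : TM Q Γ) : Set (URule (FCls Q Γ)) :=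
  Fig4Core M.halt M.δ ∪
    URule.swapLR ''
      (Fig4Core M.halt (fun q b => ((M.δ q b).1, (M.δ q b).2.1, (M.δ q b).2.2.swap)))

/-- The word (ground type, with the trailing `Z` implicit) of the initial configuration
`Z E E N L_# N M^L N L_{a₁} … N L_{a_m} N L_# Q_I^wR ◁ E E Z`, read off as the subtype
side of the query
`Q_I^wR L_# N L_{a_m} N … L_{a₁} N M^L N L_# N E E Z ⊑ E E Z`. -/
def initWord {Q Γ : Type*} (M : TM Q Γ) (input : List Γ) : List (FCls Q Γ) :=
  [.QwR M.init, .Lt none, .N] ++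
    (input.reverse.flatMap fun a => [.Lt (some a), .N]) ++
    [.ML, .N, .Lt none, .N, .E, .E]

/-!
A checkpoint `Z E E N ⋯ Q^w ◁ E E Z` of the subtyping machine holds, left of `◁`, the tape of
the Turing machine with its head cell flanked by a marker `M^L` or `M^R`. From a checkpoint the
machine bounces off `E E` (rules of `Q^w` and `E`) and then copies the tape cell by cell to the
other side of `◁`, reversing it; when the copying class meets the marker from the side it
faces, a rule of `Q^L` or `Q^R` performs one transition of the Turing machine. A pass meeting
the marker from the wrong side only reverses the tape, so every transition costs at most two
passes, and in the halt state the rule `Q_{q_H}^w x ◁ E E Z` leads to `•`.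

Conversely, the rules of Figure 4 are determined by their left-hand side and the first class
of their right-hand side, and the leading class of a derivation `◁*` moves along an acyclic
graph in which the descendants of siblings are disjoint. So the subtyping machine is
deterministic, and when the Turing machine diverges, the one run of the subtyping machine
passes through infinitely many checkpoints and never gets stuck.
-/

open Relation

theorem Relation.ReflTransGen.exists_of_progress {α : Type*} {R : α → α → Prop}
    (hdet : Relator.RightUnique R) {P : α → Prop} (hP : ∀ x, P x → ∃ y, P y ∧ TransGen R x y)
    {a b : α} (ha : P a) (hab : ReflTransGen R a b) : ∃ c, R b c := by
  suffices ∀ a, ReflTransGen R a b → ∀ x, P x → ReflTransGen R a x → ∃ c, R b c from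
    this a hab a ha .refl
  intro a hab
  induction hab using ReflTransGen.head_induction_on with
  | refl =>
    intro x hx hbx
    obtain ⟨y, -, hxy⟩ := hP x hx
    obtain ⟨c, hc, -⟩ := TransGen.head'_iff.mp (TransGen.trans_right hbx hxy)
    exact ⟨c, hc⟩
  | head hstep _ ih =>
    intro x hx hax
    rcases hax.cases_head with rfl | ⟨a', ha', ha'x⟩
    · obtain ⟨y, hy, hxy⟩ := hP _ hx
      obtain ⟨a', ha', ha'y⟩ := TransGen.head'_iff.mp hxy
      exact ih y hy (hdet ha' hstep ▸ ha'y)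
    · exact ih x hx (hdet ha' hstep ▸ ha'x)

theorem TM.exists_tmStep (M : TM Q Γ) (c : TMCfg Q Γ) : ∃ c', TMStep M c c' := by
  obtain ⟨q, α, b, γ⟩ := c
  rcases hδ : M.δ q b with ⟨q', b', d⟩
  cases d with
  | left =>
    rcases List.eq_nil_or_concat' α with rfl | ⟨α, a, rfl⟩
    exacts [⟨_, .moveLEnd hδ⟩, ⟨_, .moveL hδ⟩]
  | stay => exact ⟨_, .stay hδ⟩
  | right =>
    cases γ
    exacts [⟨_, .moveREnd hδ⟩, ⟨_, .moveR hδ⟩]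

/-! ### Unary subtyping machines -/

section UnaryMachine

variable {T : Set (URule C)}

def spaced (n : C) (s : List C) : List C := s.flatMap fun x => [x, n]

@[simp] theorem spaced_nil (n : C) : spaced n [] = [] := rfl

@[simp] theorem spaced_cons (n x : C) (s : List C) : spaced n (x :: s) = x :: n :: spaced n s :=
  rfl

@[simp] theorem spaced_append (n : C) (s t : List C) :
    spaced n (s ++ t) = spaced n s ++ spaced n t := by
  simp [spaced]

theorem USub.of_reflTransGen {x : UConfig C} (h : ReflTransGen (UStep T) x none) :
    ∀ {w w' : List C}, x = some (w, w') → USub T w w' := by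
  induction h using ReflTransGen.head_induction_on with
  | refl => intro _ _ h; cases h
  | head hstep _ ih =>
    rintro w w' rfl
    cases hstep with
    | halt h => exact .nil h
    | move h => exact .cons h (ih rfl)

theorem USub.iff_reflTransGen {w w' : List C} :
    USub T w w' ↔ ReflTransGen (UStep T) (some (w, w')) none := by
  refine ⟨fun h => ?_, fun h => USub.of_reflTransGen h rfl⟩
  induction h with
  | nil h => exact .single (.halt h)
  | cons h _ ih => exact .head (.move h) ih

namespace UStep

theorem of_rule {c d : C} {rhs u e ds : List C} (h : ⟨c, rhs, true⟩ ∈ T)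
    (hr : rhs ++ u = d :: e) : UStep T (some (c :: u, d :: ds)) (some (ds, e)) :=
  .move (.single ⟨_, h, u, rfl, by simp [hr]⟩)

theorem of_head_eq {d : C} {u ds : List C} : UStep T (some (d :: u, d :: ds)) (some (ds, u)) :=
  .move .refl

theorem reflTransGen_scan {W n : C} {s : List C} (h : ∀ x ∈ s, ⟨W, [x, n, W, x, n], true⟩ ∈ T)
    (u v : List C) :
    ReflTransGen (UStep T) (some (W :: u, spaced n s ++ v))
      (some (W :: (spaced n s.reverse ++ u), v)) := by
  induction s generalizing u with
  | nil => exact .refl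
  | cons x s ih =>
    have hx : ReflTransGen (UStep T) (some (W :: u, spaced n (x :: s) ++ v))
        (some (W :: x :: n :: u, spaced n s ++ v)) :=
      .head (.of_rule (h x (by simp)) rfl) (.single .of_head_eq)
    simpa using hx.trans (ih (fun y hy => h y (by simp [hy])) (x :: n :: u))

theorem transGen_turn {W W' B e n : C} (hW : ⟨W, [e, B, n], true⟩ ∈ T)
    (he : ⟨e, [B, n, W', e, e], true⟩ ∈ T) (z : List C) :
    TransGen (UStep T) (some (W :: z, [e, e])) (some ([W', e, e], z)) :=
  .head (.of_rule hW rfl) (.head (.of_rule he rfl) (.single .of_head_eq))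

theorem reflTransGen_trigger {W W' Q m n x : C} {X u v : List C}
    (hW : ⟨W, [m, n, Q], true⟩ ∈ T) (hQ : ⟨Q, x :: n :: W' :: X, true⟩ ∈ T) :
    ReflTransGen (UStep T) (some (W :: u, m :: n :: x :: n :: v)) (some (W' :: (X ++ u), v)) :=
  .head (.of_rule hW rfl) (.head .of_head_eq (.head (.of_rule hQ rfl) (.single .of_head_eq)))

theorem reflTransGen_none_of_rule {W e : C} (h : ⟨W, [e, e], false⟩ ∈ T) (u : List C) :
    ReflTransGen (UStep T) (some (W :: u, [e, e])) none :=
  .head (.move (.single ⟨_, h, u, rfl, rfl⟩)) (.head .of_head_eq (.single (.halt .refl)))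

/-- A pass: `W` turns around at `e e` into `W₁`, which copies `s₁` reversed to the left of `◁`
until it meets the marker `m`; then `Q` rewrites the cell `x` behind the marker to `E₀`, and
`W₂` copies the rest. -/
theorem transGen_pass {W W₁ W₂ B e n m Q x : C} {s₁ s₂ E₀ : List C}
    (hturn : ⟨W, [e, B, n], true⟩ ∈ T) (hbounce : ⟨e, [B, n, W₁, e, e], true⟩ ∈ T)
    (h₁ : ∀ y ∈ s₁, ⟨W₁, [y, n, W₁, y, n], true⟩ ∈ T) (hhead : ⟨W₁, [m, n, Q], true⟩ ∈ T)
    (hQ : ⟨Q, x :: n :: W₂ :: spaced n E₀, true⟩ ∈ T)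
    (h₂ : ∀ y ∈ s₂, ⟨W₂, [y, n, W₂, y, n], true⟩ ∈ T) :
    TransGen (UStep T) (some (W :: (spaced n (s₁ ++ m :: x :: s₂) ++ [e, e]), [e, e]))
      (some (W₂ :: (spaced n (s₂.reverse ++ E₀ ++ s₁.reverse) ++ [e, e]), [e, e])) := by
  have hscan₁ := reflTransGen_scan h₁ [e, e] (m :: n :: x :: n :: (spaced n s₂ ++ [e, e]))
  have hscan₂ := reflTransGen_scan h₂ (spaced n E₀ ++ (spaced n s₁.reverse ++ [e, e])) [e, e]
  have hpass := (transGen_turn hturn hbounce _).trans_left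
    (hscan₁.trans ((reflTransGen_trigger hhead hQ).trans hscan₂))
  simpa using hpass

theorem transGen_pass_of_scan {W W₁ B e n : C} {s : List C}
    (hturn : ⟨W, [e, B, n], true⟩ ∈ T) (hbounce : ⟨e, [B, n, W₁, e, e], true⟩ ∈ T)
    (h : ∀ y ∈ s, ⟨W₁, [y, n, W₁, y, n], true⟩ ∈ T) :
    TransGen (UStep T) (some (W :: (spaced n s ++ [e, e]), [e, e]))
      (some (W₁ :: (spaced n s.reverse ++ [e, e]), [e, e])) :=
  (transGen_turn hturn hbounce _).trans_left (reflTransGen_scan h [e, e] [e, e])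

end UStep

def HeadStep (T : Set (URule C)) (c d : C) : Prop := ∃ r ∈ T, r.lhs = c ∧ r.rhs.head? = some d

theorem UInhStar.reflTransGen_headStep (hne : ∀ r ∈ T, r.rhs ≠ []) {w v : List C}
    (h : UInhStar T w v) :
    ∀ {c d : C}, w.head? = some c → v.head? = some d → ReflTransGen (HeadStep T) c d := by
  induction h using ReflTransGen.head_induction_on with
  | refl => intro c d hc hd; rw [hc, Option.some_inj] at hd; exact hd ▸ .refl
  | head hstep _ ih =>
    obtain ⟨r, hr, u, rfl, rfl⟩ := hstep
    obtain ⟨x, xs, hx⟩ := List.exists_cons_of_ne_nil (hne r hr)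
    intro c d hc hd
    rw [List.head?_cons, Option.some_inj] at hc
    exact .head ⟨r, hr, hc, by simp [hx]⟩ (ih (c := x) (by simp [hx]) hd)

theorem UInh.transGen_headStep (hne : ∀ r ∈ T, r.rhs ≠ []) {c d : C} {u v e : List C}
    (h : UInh T (c :: u) v) (h' : UInhStar T v (d :: e)) : TransGen (HeadStep T) c d := by
  obtain ⟨r, hr, u, hcu, rfl⟩ := h
  obtain ⟨x, xs, hx⟩ := List.exists_cons_of_ne_nil (hne r hr)
  rw [List.cons.injEq] at hcu
  exact .head' ⟨r, hr, hcu.1.symm, by simp [hx]⟩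
    (UInhStar.reflTransGen_headStep hne h' (c := x) (by simp [hx]) rfl)

theorem UInhStar.cons_right_unique (hne : ∀ r ∈ T, r.rhs ≠ [])
    (hrule : ∀ r₁ ∈ T, ∀ r₂ ∈ T, r₁.lhs = r₂.lhs → r₁.rhs.head? = r₂.rhs.head? → r₁ = r₂)
    (hacyc : ∀ c, ¬ TransGen (HeadStep T) c c)
    (hsep : ∀ {c x₁ x₂ z}, HeadStep T c x₁ → HeadStep T c x₂ →
      ReflTransGen (HeadStep T) x₁ z → ReflTransGen (HeadStep T) x₂ z → x₁ = x₂)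
    {w : List C} {d : C} {e₁ e₂ : List C} (h₁ : UInhStar T w (d :: e₁))
    (h₂ : UInhStar T w (d :: e₂)) : e₁ = e₂ := by
  induction h₁ using ReflTransGen.head_induction_on generalizing e₂ with
  | refl =>
    rcases h₂.cases_head with h | ⟨v, hv, hrest⟩
    · exact (List.cons.inj h).2
    · exact (hacyc d (UInh.transGen_headStep hne hv hrest)).elim
  | head hv hrest ih =>
    rcases h₂.cases_head with rfl | ⟨v', hv', hrest'⟩
    · exact (hacyc d (UInh.transGen_headStep hne hv hrest)).elim
    obtain ⟨r, hr, u, rfl, rfl⟩ := hv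
    obtain ⟨r', hr', u', hu, rfl⟩ := hv'
    obtain ⟨hlhs, rfl⟩ := List.cons.inj hu
    obtain ⟨x, xs, hx⟩ := List.exists_cons_of_ne_nil (hne r hr)
    obtain ⟨x', xs', hx'⟩ := List.exists_cons_of_ne_nil (hne r' hr')
    have hxx' : x = x' := hsep ⟨r, hr, rfl, by simp [hx]⟩ ⟨r', hr', hlhs.symm, by simp [hx']⟩
      (UInhStar.reflTransGen_headStep hne hrest (c := x) (by simp [hx]) rfl)
      (UInhStar.reflTransGen_headStep hne hrest' (c := x') (by simp [hx']) rfl)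
    obtain rfl := hrule r hr r' hr' hlhs (by simp [hx, hx', hxx'])
    exact ih hrest'

theorem UStep.right_unique
    (hdet : ∀ {w : List C} {d : C} {e₁ e₂ : List C},
      UInhStar T w (d :: e₁) → UInhStar T w (d :: e₂) → e₁ = e₂) :
    Relator.RightUnique (UStep T) := by
  intro x y y' h h'
  cases h with
  | halt => cases h'; rfl
  | move h => cases h' with | move h' => rw [hdet h h']

end UnaryMachine

/-! ### Determinism of the table of Figure 4 -/

theorem FCls.swap_swap (x : FCls Q Γ) : x.swap.swap = x := by cases x <;> rfl

theorem FCls.swap_injective : Function.Injective (FCls.swap : FCls Q Γ → FCls Q Γ) :=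
  Function.LeftInverse.injective FCls.swap_swap

def FCls.rank : FCls Q Γ → ℕ
  | .QwL _ | .QwR _ => 2
  | .QL _ | .QR _ | .E => 1
  | _ => 0

namespace Fig4Core

variable {qH : Q} {δ : Q → Option Γ → Q × Γ × Dir} {r₁ r₂ : URule (FCls Q Γ)}

theorem eq_of_lhs_eq_of_head_eq (h₁ : Fig4Core qH δ r₁) (h₂ : Fig4Core qH δ r₂)
    (hlhs : r₁.lhs = r₂.lhs) (hhead : r₁.rhs.head? = r₂.rhs.head?) : r₁ = r₂ := by
  cases h₁ <;> cases h₂ <;> simp_all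

theorem head_ne_swapLR_of_lhs_eq {δ' : Q → Option Γ → Q × Γ × Dir} (h₁ : Fig4Core qH δ r₁)
    (h₂ : Fig4Core qH δ' r₂) (hlhs : r₁.lhs = r₂.swapLR.lhs) :
    r₁.rhs.head? ≠ r₂.swapLR.rhs.head? := by
  cases h₁ <;> cases h₂ <;> simp_all [URule.swapLR, FCls.swap]

end Fig4Core

namespace Fig4

variable {M : TM Q Γ}

theorem eq_of_lhs_eq_of_head_eq {r₁ r₂ : URule (FCls Q Γ)} (h₁ : r₁ ∈ Fig4 M)
    (h₂ : r₂ ∈ Fig4 M) (hlhs : r₁.lhs = r₂.lhs) (hhead : r₁.rhs.head? = r₂.rhs.head?) :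
    r₁ = r₂ := by
  rcases h₁ with h₁ | ⟨r₁, h₁, rfl⟩ <;> rcases h₂ with h₂ | ⟨r₂, h₂, rfl⟩
  · exact h₁.eq_of_lhs_eq_of_head_eq h₂ hlhs hhead
  · exact (h₁.head_ne_swapLR_of_lhs_eq h₂ hlhs hhead).elim
  · exact (h₂.head_ne_swapLR_of_lhs_eq h₁ hlhs.symm hhead.symm).elim
  · simp only [URule.swapLR, List.head?_map] at hlhs hhead
    rw [h₁.eq_of_lhs_eq_of_head_eq h₂ (FCls.swap_injective hlhs)
      (Option.map_injective FCls.swap_injective hhead)]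

theorem rhs_ne_nil {r : URule (FCls Q Γ)} (h : r ∈ Fig4 M) : r.rhs ≠ [] := by
  rcases h with h | ⟨r, h, rfl⟩ <;> cases h <;> simp [URule.swapLR]

theorem headStep_spec {c x : FCls Q Γ} (h : HeadStep (Fig4 M) c x) :
    x.rank < c.rank ∧ (x.rank = 0 ∨ x = .E) ∧ (c = .E ↔ ∃ p, x = .QLR p ∨ x = .QRL p) := by
  obtain ⟨r, h, rfl, hx⟩ := h
  rcases h with h | ⟨r, h, rfl⟩ <;> cases h <;>
    simp only [URule.swapLR, FCls.swap, List.map_cons, List.head?_cons, Option.some.injEq]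
      at hx ⊢ <;>
    subst hx <;> simp [FCls.rank]

theorem rank_lt_of_transGen_headStep {c x : FCls Q Γ} (h : TransGen (HeadStep (Fig4 M)) c x) :
    x.rank < c.rank := by
  induction h with
  | single h => exact (headStep_spec h).1
  | tail _ h ih => exact (headStep_spec h).1.trans ih

theorem eq_or_bounce_of_reflTransGen_headStep {x z : FCls Q Γ} (hx : x.rank = 0 ∨ x = .E)
    (h : ReflTransGen (HeadStep (Fig4 M)) x z) :
    z = x ∨ x = .E ∧ ∃ p, z = .QLR p ∨ z = .QRL p := by
  rcases h.cases_head with rfl | ⟨y, hxy, hyz⟩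
  · exact .inl rfl
  obtain ⟨hlt, -, hbounce⟩ := headStep_spec hxy
  obtain rfl : x = .E := hx.resolve_left (by omega)
  obtain ⟨p, hp⟩ := hbounce.mp rfl
  obtain rfl : z = y := by
    rcases hyz.cases_head with rfl | ⟨w, hyw, -⟩
    · rfl
    · have := (headStep_spec hyw).1
      rcases hp with rfl | rfl <;> simp [FCls.rank] at this
  exact .inr ⟨rfl, p, hp⟩

theorem eq_of_headStep_of_reflTransGen {c x₁ x₂ z : FCls Q Γ} (h₁ : HeadStep (Fig4 M) c x₁)
    (h₂ : HeadStep (Fig4 M) c x₂) (hz₁ : ReflTransGen (HeadStep (Fig4 M)) x₁ z)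
    (hz₂ : ReflTransGen (HeadStep (Fig4 M)) x₂ z) : x₁ = x₂ := by
  have hsibling : ∀ {x y}, HeadStep (Fig4 M) c x → HeadStep (Fig4 M) c y →
      (∃ p, x = .QLR p ∨ x = .QRL p) → y ≠ .E := by
    rintro x y hx hy hbounce rfl
    obtain rfl := (headStep_spec hx).2.2.mpr hbounce
    exact lt_irrefl _ (headStep_spec hy).1
  rcases eq_or_bounce_of_reflTransGen_headStep (headStep_spec h₁).2.1 hz₁ with rfl | ⟨rfl, hb₁⟩ <;>
    rcases eq_or_bounce_of_reflTransGen_headStep (headStep_spec h₂).2.1 hz₂ with h | ⟨rfl, hb₂⟩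
  · exact h
  · exact (hsibling h₁ h₂ hb₂ rfl).elim
  · exact (hsibling h₂ h₁ (h ▸ hb₁) rfl).elim
  · rfl

theorem uStep_rightUnique : Relator.RightUnique (UStep (Fig4 M)) :=
  UStep.right_unique (UInhStar.cons_right_unique (fun _ => rhs_ne_nil)
    (fun _ h₁ _ h₂ => eq_of_lhs_eq_of_head_eq h₁ h₂)
    (fun _ h => lt_irrefl _ (rank_lt_of_transGen_headStep h)) eq_of_headStep_of_reflTransGen)

/-! ### Simulation of the Turing machine -/

variable {q q' : Q} {b : Option Γ} {b' : Γ} {d : Dir}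

theorem mem_turnL (hq : q ≠ M.halt) : ⟨.QwL q, [.E, .QLR q, .N], true⟩ ∈ Fig4 M :=
  .inl (.turn q hq)

theorem mem_turnR (hq : q ≠ M.halt) : ⟨.QwR q, [.E, .QRL q, .N], true⟩ ∈ Fig4 M :=
  .inr ⟨_, .turn q hq, rfl⟩

theorem mem_bounceL : ⟨.E, [.QLR q, .N, .QwR q, .E, .E], true⟩ ∈ Fig4 M :=
  .inl (.bounce q)

theorem mem_bounceR : ⟨.E, [.QRL q, .N, .QwL q, .E, .E], true⟩ ∈ Fig4 M :=
  .inr ⟨_, .bounce q, rfl⟩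

theorem mem_scanL {x : FCls Q Γ} (hx : x = .MR ∨ ∃ a, x = .Lt a) :
    ⟨.QwL q, [x, .N, .QwL q, x, .N], true⟩ ∈ Fig4 M := by
  rcases hx with rfl | ⟨a, rfl⟩
  exacts [.inl (.waitFar q), .inl (.waitLetter q a)]

theorem mem_scanR {x : FCls Q Γ} (hx : x = .ML ∨ ∃ a, x = .Lt a) :
    ⟨.QwR q, [x, .N, .QwR q, x, .N], true⟩ ∈ Fig4 M := by
  rcases hx with rfl | ⟨a, rfl⟩
  exacts [.inr ⟨_, .waitFar q, rfl⟩, .inr ⟨_, .waitLetter q a, rfl⟩]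

theorem mem_headL : ⟨.QwL q, [.ML, .N, .QL q], true⟩ ∈ Fig4 M := .inl (.waitHead q)

theorem mem_headR : ⟨.QwR q, [.MR, .N, .QR q], true⟩ ∈ Fig4 M := .inr ⟨_, .waitHead q, rfl⟩

theorem mem_haltL : ⟨.QwL M.halt, [.E, .E], false⟩ ∈ Fig4 M := .inl .halt

theorem mem_haltR : ⟨.QwR M.halt, [.E, .E], false⟩ ∈ Fig4 M := .inr ⟨_, .halt, rfl⟩

def cells (l : List Γ) : List (FCls Q Γ) := l.map fun a => .Lt (some a)

def marked : Bool → Option Γ → List (FCls Q Γ)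
  | true, none => [.ML]
  | true, some a => [.Lt (some a), .ML]
  | false, none => [.MR]
  | false, some a => [.MR, .Lt (some a)]

def frame (α γ : List Γ) (w : List (FCls Q Γ)) : List (FCls Q Γ) :=
  .Lt none :: cells α ++ w ++ cells γ ++ [.Lt none]

/-- The tape `L_# α b γ L_#` with the head cell `b` marked by `M^L` on its right (`ml = true`)
or by `M^R` on its left; a pass looks for the marker and reads the cell beyond it. -/
def tape (ml : Bool) (c : TMCfg Q Γ) : List (FCls Q Γ) := frame c.left c.right (marked ml c.cur)

/-- The head is on a blank only past the end of the tape on the side the marker looks at,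
so that the cell beyond the marker is then the end marker `L_#`. -/
def WellMarked (ml : Bool) (c : TMCfg Q Γ) : Prop :=
  c.cur = none → if ml then c.left = [] else c.right = []

/-- For `dir = true` the tape is stored reversed and the next pass copies it with `Q^wL`. -/
def checkpoint : Bool → Bool → TMCfg Q Γ → UConfig (FCls Q Γ)
  | true, ml, c => some (.QwR c.state :: (spaced .N (tape ml c).reverse ++ [.E, .E]), [.E, .E])
  | false, ml, c => some (.QwL c.state :: (spaced .N (tape ml c) ++ [.E, .E]), [.E, .E])

/-- Reading `L_#` consumes the end marker, which the rule puts back. -/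
def restored : Option Γ → List (FCls Q Γ)
  | none => [.Lt none]
  | some _ => []

/-- What replaces the head cell and its marker after writing `b` and moving in direction `d`,
in a pass that met the marker `M^L` (`ml = true`) or `M^R`. -/
def written (ml : Bool) (b : Γ) : Dir → List (FCls Q Γ)
  | .left => [.ML, .Lt (some b)]
  | .stay => marked (!ml) (some b)
  | .right => [.Lt (some b), .MR]

theorem mem_transL (h : M.δ q b = (q', b', d)) :
    ⟨.QL q, .Lt b :: .N :: .QwL q' :: spaced .N (restored b ++ written true b' d), true⟩ ∈
      Fig4 M := by
  cases b <;> cases d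
  exacts [.inl (.blankL h), .inl (.blankS h), .inl (.blankR h), .inl (.transL h),
    .inl (.transS h), .inl (.transR h)]

theorem mem_transR (h : M.δ q b = (q', b', d)) :
    ⟨.QR q, .Lt b :: .N :: .QwR q' :: spaced .N (restored b ++ (written false b' d).reverse),
      true⟩ ∈ Fig4 M := by
  have hs : ((M.δ q b).1, (M.δ q b).2.1, (M.δ q b).2.2.swap) = (q', b', d.swap) := by rw [h]
  cases b <;> cases d
  exacts [.inr ⟨_, .blankR hs, rfl⟩, .inr ⟨_, .blankS hs, rfl⟩, .inr ⟨_, .blankL hs, rfl⟩,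
    .inr ⟨_, .transR hs, rfl⟩, .inr ⟨_, .transS hs, rfl⟩, .inr ⟨_, .transL hs, rfl⟩]

theorem exists_written_of_tmStep {c c' : TMCfg Q Γ} (h : TMStep M c c') :
    ∃ b' d, M.δ c.state c.cur = (c'.state, b', d) ∧
      ∀ ml, ∃ ml', WellMarked ml' c' ∧ tape ml' c' = frame c.left c.right (written ml b' d) := by
  cases h with
  | moveL hδ | moveLEnd hδ =>
    exact ⟨_, _, hδ, fun _ => ⟨true, by simp [WellMarked], by
      simp [tape, frame, marked, written, cells]⟩⟩
  | moveR hδ | moveREnd hδ =>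
    exact ⟨_, _, hδ, fun _ => ⟨false, by simp [WellMarked], by
      simp [tape, frame, marked, written, cells]⟩⟩
  | stay hδ =>
    exact ⟨_, _, hδ, fun ml => ⟨!ml, by simp [WellMarked], by simp [tape, frame, written]⟩⟩

variable {c : TMCfg Q Γ}

theorem transGen_passL (hq : c.state ≠ M.halt) (hc : WellMarked true c)
    (hδ : M.δ c.state c.cur = (q', b', d)) :
    TransGen (UStep (Fig4 M)) (checkpoint true true c)
      (some (.QwL q' :: (spaced .N (frame c.left c.right (written true b' d)) ++ [.E, .E]),
        [.E, .E])) := by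
  obtain ⟨q, α, b, γ⟩ := c
  cases b with
  | none =>
    obtain rfl : α = [] := hc rfl
    have hpass := UStep.transGen_pass (mem_turnR hq) mem_bounceR
      (s₁ := .Lt none :: (cells γ).reverse) (fun y hy => mem_scanL (by simp [cells] at hy; aesop))
      mem_headL (mem_transL hδ) (s₂ := []) (fun _ h => (List.not_mem_nil h).elim)
    simpa [checkpoint, tape, frame, marked, restored, cells] using hpass
  | some a =>
    have hpass := UStep.transGen_pass (mem_turnR hq) mem_bounceR
      (s₁ := .Lt none :: (cells γ).reverse) (fun y hy => mem_scanL (by simp [cells] at hy; aesop))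
      mem_headL (mem_transL hδ) (s₂ := (.Lt none :: cells α).reverse)
      (fun y hy => mem_scanL (by simp [cells] at hy; aesop))
    simpa [checkpoint, tape, frame, marked, restored, cells] using hpass

theorem transGen_passR (hq : c.state ≠ M.halt) (hc : WellMarked false c)
    (hδ : M.δ c.state c.cur = (q', b', d)) :
    TransGen (UStep (Fig4 M)) (checkpoint false false c)
      (some (.QwR q' :: (spaced .N (frame c.left c.right (written false b' d)).reverse ++
        [.E, .E]), [.E, .E])) := by
  obtain ⟨q, α, b, γ⟩ := c
  cases b with
  | none =>
    obtain rfl : γ = [] := hc rfl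
    have hpass := UStep.transGen_pass (mem_turnL hq) mem_bounceL
      (s₁ := .Lt none :: cells α) (fun y hy => mem_scanR (by simp [cells] at hy; aesop))
      mem_headR (mem_transR hδ) (s₂ := []) (fun _ h => (List.not_mem_nil h).elim)
    simpa [checkpoint, tape, frame, marked, restored, cells] using hpass
  | some a =>
    have hpass := UStep.transGen_pass (mem_turnL hq) mem_bounceL
      (s₁ := .Lt none :: cells α) (fun y hy => mem_scanR (by simp [cells] at hy; aesop))
      mem_headR (mem_transR hδ) (s₂ := cells γ ++ [.Lt none])
      (fun y hy => mem_scanR (by simp [cells] at hy; aesop))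
    simpa [checkpoint, tape, frame, marked, restored, cells] using hpass

theorem transGen_skip {ml : Bool} (hq : c.state ≠ M.halt) :
    TransGen (UStep (Fig4 M)) (checkpoint (!ml) ml c) (checkpoint ml ml c) := by
  cases ml
  · simpa [checkpoint] using UStep.transGen_pass_of_scan (mem_turnR hq) mem_bounceR
      (s := (tape false c).reverse) fun y hy => mem_scanL (by
        simp only [tape, frame, cells, List.mem_reverse] at hy
        cases c.cur <;> simp [marked] at hy <;> aesop)
  · simpa [checkpoint] using UStep.transGen_pass_of_scan (mem_turnL hq) mem_bounceL
      (s := tape true c) fun y hy => mem_scanR (by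
        simp only [tape, frame, cells] at hy
        cases c.cur <;> simp [marked] at hy <;> aesop)

theorem transGen_checkpoint_of_tmStep {c' : TMCfg Q Γ} {ml : Bool} (hq : c.state ≠ M.halt)
    (hc : WellMarked ml c) (h : TMStep M c c') (dir : Bool) :
    ∃ dir' ml', WellMarked ml' c' ∧
      TransGen (UStep (Fig4 M)) (checkpoint dir ml c) (checkpoint dir' ml' c') := by
  obtain ⟨b', d, hδ, hwritten⟩ := exists_written_of_tmStep h
  obtain ⟨ml', hc', htape⟩ := hwritten ml
  have hpass : TransGen (UStep (Fig4 M)) (checkpoint ml ml c) (checkpoint (!ml) ml' c') := by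
    cases ml
    · simpa [checkpoint, htape] using transGen_passR hq hc hδ
    · simpa [checkpoint, htape] using transGen_passL hq hc hδ
  refine ⟨!ml, ml', hc', ?_⟩
  by_cases hdir : dir = ml
  · exact hdir ▸ hpass
  · obtain rfl : dir = !ml := by cases dir <;> cases ml <;> simp_all
    exact (transGen_skip hq).trans hpass

theorem reflTransGen_none (hq : c.state = M.halt) (dir ml : Bool) :
    ReflTransGen (UStep (Fig4 M)) (checkpoint dir ml c) none := by
  cases dir
  · simpa only [checkpoint, hq] using UStep.reflTransGen_none_of_rule mem_haltL _
  · simpa only [checkpoint, hq] using UStep.reflTransGen_none_of_rule mem_haltR _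

theorem reflTransGen_none_of_reflTransGen {c' : TMCfg Q Γ} (h : ReflTransGen (TMStep M) c c')
    (hhalt : c'.state = M.halt) {dir ml : Bool} (hc : WellMarked ml c) :
    ReflTransGen (UStep (Fig4 M)) (checkpoint dir ml c) none := by
  induction h using ReflTransGen.head_induction_on generalizing dir ml with
  | refl => exact reflTransGen_none hhalt dir ml
  | @head c c₁ hstep _ ih =>
    by_cases hq : c.state = M.halt
    · exact reflTransGen_none hq dir ml
    obtain ⟨dir', ml', hc', hsim⟩ := transGen_checkpoint_of_tmStep hq hc hstep dir
    exact hsim.to_reflTransGen.trans (ih hc')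

theorem checkpoint_init (input : List Γ) :
    checkpoint true true ⟨M.init, [], none, input⟩ = some (initWord M input, [.E, .E]) := by
  simp [checkpoint, initWord, tape, frame, marked, cells, spaced, ← List.map_reverse,
    List.flatMap_map]

theorem reflTransGen_none_of_tmHalts {input : List Γ} (h : TMHalts M input) :
    ReflTransGen (UStep (Fig4 M)) (some (initWord M input, [.E, .E])) none := by
  obtain ⟨c, hrun, hhalt⟩ := h
  simpa [checkpoint_init] using
    reflTransGen_none_of_reflTransGen hrun hhalt (dir := true) (ml := true) (by simp [WellMarked])

theorem exists_uStep_of_not_tmHalts {input : List Γ} (h : ¬ TMHalts M input)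
    {x : UConfig (FCls Q Γ)}
    (hx : ReflTransGen (UStep (Fig4 M)) (some (initWord M input, [.E, .E])) x) :
    ∃ y, UStep (Fig4 M) x y := by
  refine hx.exists_of_progress uStep_rightUnique
    (P := fun x => ∃ c dir ml, ReflTransGen (TMStep M) ⟨M.init, [], none, input⟩ c ∧
      WellMarked ml c ∧ x = checkpoint dir ml c) ?_
    ⟨_, true, true, .refl, by simp [WellMarked], (checkpoint_init input).symm⟩
  rintro _ ⟨c, dir, ml, hrun, hc, rfl⟩
  obtain ⟨c', hstep⟩ := M.exists_tmStep c
  obtain ⟨dir', ml', hc', hsim⟩ :=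
    transGen_checkpoint_of_tmStep (fun hq => h ⟨c, hrun, hq⟩) hc hstep dir
  exact ⟨_, ⟨c', dir', ml', hrun.tail hstep, hc', rfl⟩, hsim⟩

end Fig4

/-- **Correctness of the reduction (Figure 4)**: if the Turing machine `M` halts on
input `α_I`, the simulating subtyping machine, started in the configuration above,
reaches the halting configuration `•`; if `M` does not halt, the subtyping machine runs
forever (every reachable configuration has a successor — in particular `•` is never
reached). Hence `Q_I^wR L_# N L_{a_m} N … L_{a₁} N M^L N L_# N E E Z ⊑ E E Z` iff `M`
halts on `α_I`. -/
theorem fig4_simulation {Q Γ : Type*} (M : TM Q Γ) (input : List Γ) :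
    (TMHalts M input →
      Relation.ReflTransGen (UStep (Fig4 M))
        (some (initWord M input, [.E, .E])) none) ∧
    (¬ TMHalts M input →
      ∀ cfg : UConfig (FCls Q Γ),
        Relation.ReflTransGen (UStep (Fig4 M))
          (some (initWord M input, [.E, .E])) cfg →
        ∃ cfg', UStep (Fig4 M) cfg cfg') ∧
    (USub (Fig4 M) (initWord M input) [.E, .E] ↔ TMHalts M input) := by
  refine ⟨Fig4.reflTransGen_none_of_tmHalts, fun h _ => Fig4.exists_uStep_of_not_tmHalts h,
    fun hsub => ?_, fun h => USub.iff_reflTransGen.mpr (Fig4.reflTransGen_none_of_tmHalts h)⟩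
  by_contra h
  obtain ⟨_, hstep⟩ := Fig4.exists_uStep_of_not_tmHalts h (USub.iff_reflTransGen.mp hsub)
  cases hstep
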